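/- Let Σ be a finite alphabet, A ⊆ Σ × Σ, n an even positive integer, and let w_s and w_t be words of length n. Let G = G(Σ, A, n) and k = n + 1 + 3(m(n−1) + n) with m = |Σ × Σ ∖ A|. If (W = (Σ, A), w_s, w_t) is a yes-instance of Even/Odd Word Reconfiguration, then I_{w_s} and I_{w_t} belong to the same connected component of the token-sliding reconfiguration graph S_k(G), i.e., there is a sequence of single-token slides transforming I_{w_s} into I_{w_t} through independent sets of size k. -/

import Mathlib

open scoped Classical
noncomputable section

/-- The internal edges of a cage, between the vertices `f_1, …, f_8`
(0-indexed): the three internally vertex-disjoint paths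
`f_1–f_2–f_3–f_4`, `f_1–f_5–f_6–f_4` and `f_1–f_7–f_8–f_4`. -/
def cageFF : List (Fin 8 × Fin 8) :=
  [(0, 1), (1, 2), (2, 3), (0, 4), (4, 5), (5, 3), (0, 6), (6, 7), (7, 3)]

/-- The cage vertices adjacent to `h₁`: `f_1, f_3, f_6, f_8` (0-indexed). -/
def cageH1 : List (Fin 8) := [0, 2, 5, 7]

/-- The cage vertices adjacent to `h₂`: `f_2, f_4, f_5, f_7` (0-indexed). -/
def cageH2 : List (Fin 8) := [1, 3, 4, 6]

/-- Adding a cage between `h₁ c` and `h₂ c` for every `c : ι`. -/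
def addCages {V ι : Type*} (B : SimpleGraph V) (h₁ h₂ : ι → V) :
    SimpleGraph (V ⊕ ι × Fin 8) :=
  SimpleGraph.fromRel (fun a b =>
    match a, b with
    | Sum.inl u, Sum.inl v => B.Adj u v
    | Sum.inl u, Sum.inr (c, j) => (u = h₁ c ∧ j ∈ cageH1) ∨ (u = h₂ c ∧ j ∈ cageH2)
    | Sum.inr _, Sum.inl _ => False
    | Sum.inr (c, j), Sum.inr (c', j') => c = c' ∧ (j, j') ∈ cageFF)

/-- The base vertices of the construction `G(Σ, A, n)`:
`Sum.inl (i, σ)` is the vertex `x^{i+1}_σ` (positions are `1`-based in the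
paper, so `i : Fin n` encodes position `i + 1`); `Sum.inr (Sum.inl i)` is the
vertex `o^{i+1}` (if `i + 1` is odd) resp. `e^{i+1}` (if `i + 1` is even); and
`Sum.inr (Sum.inr 0)`, `Sum.inr (Sum.inr 1)` are the vertices `z_1`, `z_2`. -/
abbrev BaseV (Sig : Type) (n : ℕ) : Type := (Fin n × Sig) ⊕ (Fin n ⊕ Fin 2)

/-- The index type for the cages of the construction: `Sum.inl` indexes the
cage between `x^i_j` and `x^{i+1}_{j'}` for `(σ_j, σ_{j'}) ∉ A`; `Sum.inr i`
indexes the cage between `z_1` and `o^{i+1}` (for `i + 1` odd), resp. between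
`z_2` and `e^{i+1}` (for `i + 1` even). -/
abbrev CageIdx (Sig : Type) [DecidableEq Sig] (A : Finset (Sig × Sig)) (n : ℕ) : Type :=
  {q : (Fin n × Fin n) × Sig × Sig //
      (q.1.2 : ℕ) = (q.1.1 : ℕ) + 1 ∧ (q.2.1, q.2.2) ∉ A} ⊕ Fin n

/-- The base graph: `o^i` (resp. `e^i`) is adjacent to every vertex of `X_i`,
and `z_1` is adjacent to `z_2`. -/
def baseGraph (Sig : Type) (n : ℕ) : SimpleGraph (BaseV Sig n) :=
  SimpleGraph.fromRel (fun a b =>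
    match a, b with
    | Sum.inl (i, _), Sum.inr (Sum.inl i') => i = i'
    | Sum.inr (Sum.inr a), Sum.inr (Sum.inr b) => a ≠ b
    | _, _ => False)

variable (Sig : Type) [Fintype Sig] [DecidableEq Sig] (A : Finset (Sig × Sig)) (n : ℕ)

/-- The first endpoint (`h_1`) of each cage. -/
def cageH1v : CageIdx Sig A n → BaseV Sig n
  | Sum.inl q => Sum.inl (q.1.1.1, q.1.2.1)
  | Sum.inr i => Sum.inr (Sum.inr (if Odd ((i : ℕ) + 1) then 0 else 1))

/-- The second endpoint (`h_2`) of each cage. -/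
def cageH2v : CageIdx Sig A n → BaseV Sig n
  | Sum.inl q => Sum.inl (q.1.1.2, q.1.2.2)
  | Sum.inr i => Sum.inr (Sum.inl i)

/-- The full vertex set of the construction `G(Σ, A, n)`. -/
abbrev FullV : Type := BaseV Sig n ⊕ CageIdx Sig A n × Fin 8

/-- The graph `G(Σ, A, n)` of the token-sliding construction. -/
def tsGraph : SimpleGraph (FullV Sig A n) :=
  addCages (baseGraph Sig n) (cageH1v Sig A n) (cageH2v Sig A n)

/-- `m = |Σ × Σ ∖ A|`. -/
def tsM : ℕ := ((Finset.univ : Finset (Sig × Sig)) \ A).card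

/-- The token count `k = n + 1 + 3(m(n−1) + n)`. -/
def tsK : ℕ := n + 1 + 3 * (tsM Sig A * (n - 1) + n)

/-- `I` is an independent set of `G`. -/
def IsIndep {α : Type*} (G : SimpleGraph α) (I : Finset α) : Prop :=
  ∀ u ∈ I, ∀ v ∈ I, ¬ G.Adj u v

/-- An independent set `I` of `G(Σ, A, n)` of size exactly `k` is
well-formed if: exactly one of its tokens (the switch token) is on `z_1` or
`z_2`; for each `i`, exactly one token (the `Σ_i`-token) is on a vertex of
`X_i ∪ {o^i}` (for `i` odd) resp. `X_i ∪ {e^i}` (for `i` even); and each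
extended cage (including its two endpoints) carries exactly three tokens. -/
def WellFormed (I : Finset (FullV Sig A n)) : Prop :=
  IsIndep (tsGraph Sig A n) I ∧
  I.card = tsK Sig A n ∧
  (I.filter (fun w => w = Sum.inl (Sum.inr (Sum.inr 0)) ∨
      w = Sum.inl (Sum.inr (Sum.inr 1)))).card = 1 ∧
  (∀ i : Fin n,
    (I.filter (fun w => (∃ σ : Sig, w = Sum.inl (Sum.inl (i, σ))) ∨
        w = Sum.inl (Sum.inr (Sum.inl i)))).card = 1) ∧
  (∀ c : CageIdx Sig A n,
    (I.filter (fun w => w = Sum.inl (cageH1v Sig A n c) ∨ w = Sum.inl (cageH2v Sig A n c) ∨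
        ∃ j : Fin 8, w = Sum.inr (c, j))).card = 3)

/-- `I` is strictly well-formed: well-formed, with every `Σ_i`-token on a
vertex of `X_i` (not on `o^i` or `e^i`). -/
def StrictWellFormed (I : Finset (FullV Sig A n)) : Prop :=
  WellFormed Sig A n I ∧ ∀ i : Fin n, Sum.inl (Sum.inr (Sum.inl i)) ∉ I

/-- `w : Fin n → Σ` is a word: every two consecutive symbols are in `A`. -/
def IsWord (w : Fin n → Sig) : Prop :=
  ∀ i i' : Fin n, (i' : ℕ) = (i : ℕ) + 1 → (w i, w i') ∈ A

/-- Two strings differ only at even positions or only at odd positions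
(positions are `1`-based: `i : Fin n` is position `i + 1`). -/
def EOStep (w w' : Fin n → Sig) : Prop :=
  (∀ i : Fin n, Odd ((i : ℕ) + 1) → w i = w' i) ∨
  (∀ i : Fin n, Even ((i : ℕ) + 1) → w i = w' i)

/-- `(W = (Σ, A), ws, wt)` is a yes-instance of Even/Odd Word Reconfiguration:
there is a sequence of words from `ws` to `wt` in which consecutive words
differ only at even positions or only at odd positions. -/
def EOReach (ws wt : Fin n → Sig) : Prop :=
  ∃ (ℓ : ℕ) (w : ℕ → Fin n → Sig), w 0 = ws ∧ w ℓ = wt ∧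
    (∀ i ≤ ℓ, IsWord Sig A n (w i)) ∧ ∀ i < ℓ, EOStep Sig n (w i) (w (i + 1))

/-- Whether the second endpoint (`h_2`) of a cage carries a token of `I_w`. -/
def cageOcc (w : Fin n → Sig) : CageIdx Sig A n → Prop
  | Sum.inl q => w q.1.1.2 = q.1.2.2
  | Sum.inr _ => False

/-- The strictly well-formed independent set `I_w` associated with a word `w`:
it contains `z_1`, the vertex `x^i_{w i}` for each position `i`, and, in each
`(u,v)`-cage, the vertices `f_2, f_5, f_7` if there is no token on `v` and
`f_3, f_6, f_8` otherwise. -/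
def Iword (w : Fin n → Sig) : Finset (FullV Sig A n) :=
  Finset.univ.filter (fun a =>
    match a with
    | Sum.inl (Sum.inl (i, σ)) => w i = σ
    | Sum.inl (Sum.inr (Sum.inl _)) => False
    | Sum.inl (Sum.inr (Sum.inr j)) => j = 0
    | Sum.inr (c, j) =>
        if cageOcc Sig A n w c then j = 2 ∨ j = 5 ∨ j = 7 else j = 1 ∨ j = 4 ∨ j = 6)

/-- `I` and `J` lie in the same connected component of the token-sliding
reconfiguration graph `S_k(G)`: there is a sequence of single-token slides
transforming `I` into `J` through independent sets of size exactly `k`. -/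
def TSReach {α : Type*} [DecidableEq α] (G : SimpleGraph α) (k : ℕ) (I J : Finset α) : Prop :=
  ∃ (t : ℕ) (Q : ℕ → Finset α), Q 0 = I ∧ Q t = J ∧
    (∀ i ≤ t, IsIndep G (Q i) ∧ (Q i).card = k) ∧
    (∀ i < t, ∃ u v, Q (i + 1) \ Q i = {u} ∧ Q i \ Q (i + 1) = {v} ∧ G.Adj u v)

/-!
Every independent set on the way is described token by token: the switch token on `z₁` or
`z₂`, one token per position on `X_i ∪ {o^i}` (resp. `e^i`), and one token on each of the three
paths of every cage, next to `h₁` or next to `h₂`. Such a placement is independent as soon as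
each cage token avoids the base token it would be adjacent to; this condition is separate for
every cage token, so one valid orientation of the cages can be turned into any other one token
at a time.

To change the symbol at a single position `j`, move the switch token off the endpoint `z₁`/`z₂`
of the cage at `o^j`/`e^j`, turn that cage towards `z₁`/`z₂`, slide the token of position `j`
onto `o^j`/`e^j`, re-orient the cages whose `h₂` lies in `X_j` for the new symbol (their `h₁`
stays free because the neighbouring symbol forms a word with both the old and the new one), and
undo the first steps for the new word. An even/odd step changes pairwise non-adjacent positions
only, so it decomposes into single-position changes through words.
-/

open Relation Function

theorem Relation.ReflTransGen.of_update_steps {ι β : Type*} [Fintype ι] [DecidableEq ι]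
    {r : (ι → β) → (ι → β) → Prop} {f g : ι → β}
    (h : ∀ x : ι → β, (∀ i, x i = f i ∨ x i = g i) → ∀ i, x i ≠ g i →
      r x (update x i (g i))) :
    ReflTransGen r f g := by
  suffices key : ∀ (s : Finset ι) (x : ι → β), (∀ i, x i = f i ∨ x i = g i) →
      (∀ i ∉ s, x i = g i) → ReflTransGen r x g from
    key Finset.univ f (fun _ => Or.inl rfl) (by simp)
  intro s
  induction s using Finset.induction_on with
  | empty => exact fun x _ hx => funext (hx · (Finset.notMem_empty _)) ▸ .refl
  | insert a s _ ih =>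
    intro x hfg hs
    by_cases hxa : x a = g a
    · exact ih x hfg fun i hi => by
        by_cases hia : i = a
        · exact hia ▸ hxa
        · exact hs i (by simp [hia, hi])
    · refine .head (h x hfg a hxa) (ih _ (fun i => ?_) fun i hi => ?_)
      · by_cases hia : i = a
        · subst hia; simp
        · simpa [hia] using hfg i
      · by_cases hia : i = a
        · subst hia; simp
        · simpa [hia] using hs i (by simp [hia, hi])

section Reconfiguration

variable {α : Type*} [DecidableEq α] {G : SimpleGraph α} {k : ℕ}

/-- Adjacency in the token-sliding reconfiguration graph `S_k(G)`. -/
def TSSlide (G : SimpleGraph α) (k : ℕ) (I J : Finset α) : Prop :=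
  IsIndep G I ∧ I.card = k ∧ IsIndep G J ∧ J.card = k ∧
    ∃ u v, J \ I = {u} ∧ I \ J = {v} ∧ G.Adj u v

instance : Std.Symm (TSSlide G k) where
  symm _ _ := fun ⟨hI, hIk, hJ, hJk, u, v, hu, hv, huv⟩ =>
    ⟨hJ, hJk, hI, hIk, v, u, hv, hu, huv.symm⟩

theorem TSReach.of_reflTransGen {I J : Finset α} (hI : IsIndep G I) (hIk : I.card = k)
    (h : ReflTransGen (TSSlide G k) I J) : TSReach G k I J := by
  induction h with
  | refl => exact ⟨0, fun _ => I, rfl, rfl, fun _ _ => ⟨hI, hIk⟩, fun _ h => absurd h (by omega)⟩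
  | @tail J L _ hJL ih =>
    obtain ⟨t, Q, hQ0, hQt, hQ, hslide⟩ := ih
    obtain ⟨-, -, hL, hLk, u, v, hu, hv, huv⟩ := hJL
    refine ⟨t + 1, update Q (t + 1) L, by simp [hQ0], by simp, fun i hi => ?_, fun i hi => ?_⟩
    · rcases Nat.lt_or_eq_of_le hi with hi | rfl
      · simpa [update_of_ne (Nat.ne_of_lt hi)] using hQ i (by omega)
      · simpa using ⟨hL, hLk⟩
    · rcases Nat.lt_or_eq_of_le (Nat.lt_succ_iff.mp hi) with hi | rfl
      · rw [update_of_ne (by omega), update_of_ne (by omega)]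
        exact hslide i hi
      · exact ⟨u, v, by simpa [hQt] using hu, by simpa [hQt] using hv, huv⟩

theorem isIndep_image_iff {ι : Type*} [Fintype ι] {f : ι → α} :
    IsIndep G (Finset.univ.image f) ↔ ∀ s s', ¬ G.Adj (f s) (f s') := by
  simp [IsIndep]

theorem sdiff_image_of_eq_of_ne {ι : Type*} [Fintype ι] {f g : ι → α} (hg : Injective g) {t : ι}
    (hfg : ∀ s ≠ t, f s = g s) (ht : f t ≠ g t) :
    Finset.univ.image g \ Finset.univ.image f = {g t} := by
  ext a
  simp only [Finset.mem_sdiff, Finset.mem_image, Finset.mem_univ, true_and, Finset.mem_singleton]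
  constructor
  · rintro ⟨⟨s, rfl⟩, hs⟩
    by_contra hst
    exact hs ⟨s, hfg s fun h => hst (h ▸ rfl)⟩
  · rintro rfl
    refine ⟨⟨t, rfl⟩, fun ⟨s, hs⟩ => ?_⟩
    by_cases hst : s = t
    · exact ht (hst ▸ hs)
    · exact hst (hg (hfg s hst ▸ hs))

end Reconfiguration

section Cages

variable {V ι : Type*} {B : SimpleGraph V} {h₁ h₂ : ι → V}

theorem notMem_cageFF_self : ∀ j : Fin 8, (j, j) ∉ cageFF := by decide

@[simp] theorem addCages_adj_inl_inl {u v : V} :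
    (addCages B h₁ h₂).Adj (.inl u) (.inl v) ↔ B.Adj u v := by
  simp only [addCages, SimpleGraph.fromRel_adj]
  exact ⟨fun ⟨_, h⟩ => h.elim id fun h => h.symm, fun h => ⟨by simpa using h.ne, .inl h⟩⟩

@[simp] theorem addCages_adj_inl_inr {u : V} {c : ι} {j : Fin 8} :
    (addCages B h₁ h₂).Adj (.inl u) (.inr (c, j)) ↔
      (u = h₁ c ∧ j ∈ cageH1) ∨ (u = h₂ c ∧ j ∈ cageH2) := by
  simp [addCages, SimpleGraph.fromRel_adj]

@[simp] theorem addCages_adj_inr_inr {c c' : ι} {j j' : Fin 8} :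
    (addCages B h₁ h₂).Adj (.inr (c, j)) (.inr (c', j')) ↔
      c = c' ∧ ((j, j') ∈ cageFF ∨ (j', j) ∈ cageFF) := by
  simp only [addCages, SimpleGraph.fromRel_adj, ne_eq, Sum.inr.injEq, Prod.mk.injEq]
  constructor
  · rintro ⟨-, ⟨rfl, h⟩ | ⟨rfl, h⟩⟩ <;> simp [h]
  · rintro ⟨rfl, h⟩
    refine ⟨fun ⟨_, hj⟩ => ?_, by simpa using h⟩
    subst hj
    exact h.elim (notMem_cageFF_self j) (notMem_cageFF_self j)

end Cages

/-- The position of the token on path `p` of a cage: `f_2, f_5, f_7` (next to `h₂`) for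
`false`, `f_3, f_6, f_8` (next to `h₁`) for `true`. -/
def cageSlot : Fin 3 → Bool → Fin 8
  | 0, false => 1 | 0, true => 2
  | 1, false => 4 | 1, true => 5
  | 2, false => 6 | 2, true => 7

theorem cageSlot_inj : ∀ {p p' : Fin 3} {b b' : Bool},
    cageSlot p b = cageSlot p' b' ↔ p = p' ∧ b = b' := by decide

theorem cageSlot_mem_cageH1 : ∀ {p : Fin 3} {b : Bool}, cageSlot p b ∈ cageH1 ↔ b = true := by
  decide

theorem cageSlot_mem_cageH2 : ∀ {p : Fin 3} {b : Bool}, cageSlot p b ∈ cageH2 ↔ b = false := by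
  decide

theorem eq_and_ne_of_cageSlot_mem_cageFF : ∀ {p p' : Fin 3} {b b' : Bool},
    (cageSlot p b, cageSlot p' b') ∈ cageFF → p = p' ∧ b ≠ b' := by decide

theorem cageSlot_flip_mem_cageFF : ∀ {p : Fin 3} {b : Bool},
    (cageSlot p b, cageSlot p !b) ∈ cageFF ∨ (cageSlot p !b, cageSlot p b) ∈ cageFF := by decide

theorem exists_cageSlot_true_eq_iff : ∀ {j : Fin 8},
    (∃ p, cageSlot p true = j) ↔ j = 2 ∨ j = 5 ∨ j = 7 := by decide

theorem exists_cageSlot_false_eq_iff : ∀ {j : Fin 8},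
    (∃ p, cageSlot p false = j) ↔ j = 1 ∨ j = 4 ∨ j = 6 := by decide

theorem card_consecutive_pairs (n : ℕ) :
    Fintype.card {p : Fin n × Fin n // (p.2 : ℕ) = p.1 + 1} = n - 1 :=
  Fintype.card_fin (n - 1) ▸ Fintype.card_congr
    { toFun := fun q => ⟨q.1.1, by have := q.1.2.isLt; have := q.2; omega⟩
      invFun := fun i => ⟨(⟨i, by omega⟩, ⟨i + 1, by omega⟩), rfl⟩
      left_inv := fun q => Subtype.ext (Prod.ext rfl (Fin.ext q.2.symm))
      right_inv := fun _ => rfl }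

section Counting

variable {Sig : Type} [Fintype Sig] [DecidableEq Sig] {A : Finset (Sig × Sig)} {n : ℕ}

theorem card_cageIdx : Fintype.card (CageIdx Sig A n) = tsM Sig A * (n - 1) + n := by
  rw [Fintype.card_sum, Fintype.card_fin,
    Fintype.card_congr (Equiv.subtypeProdEquivProd
      (p := fun p : Fin n × Fin n => (p.2 : ℕ) = p.1 + 1)
      (q := fun s : Sig × Sig => (s.1, s.2) ∉ A)),
    Fintype.card_prod, card_consecutive_pairs, mul_comm, tsM, Fintype.card_subtype]
  congr 3
  ext
  simp

end Counting

/-- A placement of `k` tokens on `G(Σ, A, n)`, one per token of `I_w`: the switch token sits on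
`z_{switch+1}`; the token of position `i` sits on `x^{i+1}_σ` if `pos i = some σ` and on
`o^{i+1}`/`e^{i+1}` if `pos i = none`; the token on path `p` of cage `c` sits on
`cageSlot p (cage (c, p))`. -/
structure TokenConfig (Sig : Type) [DecidableEq Sig] (A : Finset (Sig × Sig)) (n : ℕ) where
  switch : Fin 2
  pos : Fin n → Option Sig
  cage : CageIdx Sig A n × Fin 3 → Bool

namespace TokenConfig

variable {Sig : Type} [DecidableEq Sig] {A : Finset (Sig × Sig)} {n : ℕ}
  (C : TokenConfig Sig A n)

def baseTok : Option (Fin n) → BaseV Sig n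
  | none => .inr (.inr C.switch)
  | some i => (C.pos i).elim (.inr (.inl i)) fun σ => .inl (i, σ)

def tok : Option (Fin n) ⊕ CageIdx Sig A n × Fin 3 → FullV Sig A n :=
  Sum.elim (fun t => .inl (C.baseTok t)) fun cp => .inr (cp.1, cageSlot cp.2 (C.cage cp))

def toFinset [Fintype Sig] : Finset (FullV Sig A n) := Finset.univ.image C.tok

def Free (v : BaseV Sig n) : Prop := ∀ t, C.baseTok t ≠ v

def Valid : Prop :=
  ∀ cp : CageIdx Sig A n × Fin 3,
    C.Free (if C.cage cp then cageH1v Sig A n cp.1 else cageH2v Sig A n cp.1)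

variable {C}

@[simp] theorem baseTok_none : C.baseTok none = .inr (.inr C.switch) := rfl

@[simp] theorem baseTok_some_eq_x_iff {i i' : Fin n} {σ : Sig} :
    C.baseTok (some i) = .inl (i', σ) ↔ i = i' ∧ C.pos i = some σ := by
  cases h : C.pos i <;> simp [baseTok, h, eq_comm]

@[simp] theorem baseTok_some_eq_o_iff {i i' : Fin n} :
    C.baseTok (some i) = .inr (.inl i') ↔ i = i' ∧ C.pos i = none := by
  cases h : C.pos i <;> simp [baseTok, h, eq_comm]

@[simp] theorem baseTok_some_ne_z {i : Fin n} {a : Fin 2} :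
    C.baseTok (some i) ≠ .inr (.inr a) := by
  cases h : C.pos i <;> simp [baseTok, h]

@[simp] theorem free_x {i : Fin n} {σ : Sig} : C.Free (.inl (i, σ)) ↔ C.pos i ≠ some σ := by
  simp [Free, Option.forall]

@[simp] theorem free_o {i : Fin n} : C.Free (.inr (.inl i)) ↔ C.pos i ≠ none := by
  simp [Free, Option.forall]

@[simp] theorem free_z {a : Fin 2} : C.Free (.inr (.inr a)) ↔ C.switch ≠ a := by
  simp [Free, Option.forall]

theorem baseTok_injective : Injective C.baseTok := by
  rintro (_ | i) (_ | i') h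
  · rfl
  · cases h' : C.pos i' <;> simp [baseTok, h'] at h
  · cases h' : C.pos i <;> simp [baseTok, h'] at h
  · cases hi : C.pos i <;> cases hi' : C.pos i' <;> simp_all [baseTok]

theorem not_adj_baseTok (t t' : Option (Fin n)) :
    ¬ (baseGraph Sig n).Adj (C.baseTok t) (C.baseTok t') := by
  rcases t with _ | i <;> rcases t' with _ | i'
  · simp [baseTok, baseGraph]
  · cases h' : C.pos i' <;> simp [baseTok, baseGraph, h']
  · cases h' : C.pos i <;> simp [baseTok, baseGraph, h']
  · cases hi : C.pos i <;> cases hi' : C.pos i' <;> simp [baseTok, baseGraph, hi, hi'] <;>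
      rintro rfl <;> simp_all

theorem mem_toFinset_inl [Fintype Sig] {v : BaseV Sig n} :
    .inl v ∈ C.toFinset ↔ ¬ C.Free v := by
  simp [toFinset, Free, tok]

theorem mem_toFinset_inr [Fintype Sig] {c : CageIdx Sig A n} {j : Fin 8} :
    .inr (c, j) ∈ C.toFinset ↔ ∃ p, cageSlot p (C.cage (c, p)) = j := by
  simp [toFinset, tok]

theorem tok_injective : Injective C.tok :=
  (Sum.inl_injective.comp C.baseTok_injective).sumElim
    (fun ⟨c, p⟩ ⟨c', p'⟩ h => by
      simp only [Sum.inr.injEq, Prod.mk.injEq] at h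
      obtain ⟨rfl, h⟩ := h
      rw [(cageSlot_inj.mp h).1])
    (fun _ _ => Sum.inl_ne_inr)

theorem isIndep [Fintype Sig] (hC : C.Valid) : IsIndep (tsGraph Sig A n) C.toFinset := by
  have base_cage : ∀ t cp, ¬ (tsGraph Sig A n).Adj (C.tok (.inl t)) (C.tok (.inr cp)) := by
    rintro t ⟨c, p⟩ hadj
    have hfree := hC (c, p)
    simp only [tok, Sum.elim_inl, Sum.elim_inr, tsGraph, addCages_adj_inl_inr,
      cageSlot_mem_cageH1, cageSlot_mem_cageH2] at hadj
    rcases hadj with ⟨h, hcp⟩ | ⟨h, hcp⟩ <;> simp only [hcp] at hfree <;> exact hfree t h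
  refine isIndep_image_iff.mpr ?_
  rintro (t | ⟨c, p⟩) (t' | ⟨c', p'⟩) hadj
  · exact C.not_adj_baseTok t t' (by simpa [tok, tsGraph] using hadj)
  · exact base_cage t _ hadj
  · exact base_cage t' _ hadj.symm
  · simp only [tok, Sum.elim_inr, tsGraph, addCages_adj_inr_inr] at hadj
    obtain ⟨rfl, h | h⟩ := hadj
    · obtain ⟨rfl, h⟩ := eq_and_ne_of_cageSlot_mem_cageFF h
      exact h rfl
    · obtain ⟨rfl, h⟩ := eq_and_ne_of_cageSlot_mem_cageFF h
      exact h rfl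

theorem card_toFinset [Fintype Sig] : C.toFinset.card = tsK Sig A n := by
  rw [toFinset, Finset.card_image_of_injective _ C.tok_injective, Finset.card_univ,
    Fintype.card_sum, Fintype.card_option, Fintype.card_prod, card_cageIdx, Fintype.card_fin,
    Fintype.card_fin, tsK]
  ring

section Slides

variable [Fintype Sig]

theorem tsSlide_of_tok_eq_of_adj {C' : TokenConfig Sig A n} (hC : C.Valid) (hC' : C'.Valid)
    {t : Option (Fin n) ⊕ CageIdx Sig A n × Fin 3} (hagree : ∀ s ≠ t, C.tok s = C'.tok s)
    (hadj : (tsGraph Sig A n).Adj (C.tok t) (C'.tok t)) :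
    TSSlide (tsGraph Sig A n) (tsK Sig A n) C.toFinset C'.toFinset :=
  ⟨C.isIndep hC, C.card_toFinset, C'.isIndep hC', C'.card_toFinset, C'.tok t, C.tok t,
    sdiff_image_of_eq_of_ne C'.tok_injective hagree hadj.ne,
    sdiff_image_of_eq_of_ne C.tok_injective (fun s hs => (hagree s hs).symm) hadj.ne.symm,
    hadj.symm⟩

theorem tsSlide_withSwitch {z : Fin 2} (hz : C.switch ≠ z) (hC : C.Valid)
    (hC' : { C with switch := z }.Valid) :
    TSSlide (tsGraph Sig A n) (tsK Sig A n) C.toFinset { C with switch := z }.toFinset := by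
  refine tsSlide_of_tok_eq_of_adj (t := .inl none) hC hC' ?_ ?_
  · rintro ((_ | i) | cp) hs
    · exact absurd rfl hs
    all_goals rfl
  · simp [tok, baseTok, tsGraph, baseGraph, hz]

theorem tsSlide_withPos_update_none {j : Fin n} {σ : Sig} (hj : C.pos j = some σ)
    (hC : C.Valid) (hC' : { C with pos := update C.pos j none }.Valid) :
    TSSlide (tsGraph Sig A n) (tsK Sig A n) C.toFinset
      { C with pos := update C.pos j none }.toFinset := by
  refine tsSlide_of_tok_eq_of_adj (t := .inl (some j)) hC hC' ?_ ?_
  · rintro ((_ | i) | cp) hs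
    · rfl
    · simp [tok, baseTok, update_of_ne (fun h : i = j => hs (h ▸ rfl))]
    · rfl
  · simp [tok, baseTok, tsGraph, baseGraph, hj]

theorem tsSlide_withCage_flip (cp : CageIdx Sig A n × Fin 3) (hC : C.Valid)
    (hC' : { C with cage := update C.cage cp (!C.cage cp) }.Valid) :
    TSSlide (tsGraph Sig A n) (tsK Sig A n) C.toFinset
      { C with cage := update C.cage cp (!C.cage cp) }.toFinset := by
  refine tsSlide_of_tok_eq_of_adj (t := .inr cp) hC hC' ?_ ?_
  · rintro (t | cp') hs
    · rfl
    · simp [tok, update_of_ne (fun h : cp' = cp => hs (h ▸ rfl))]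
  · simpa [tok, tsGraph] using cageSlot_flip_mem_cageFF

/-- Each cage token only has to avoid the base tokens, so every mixture of two valid
assignments of the cage tokens is valid. -/
theorem reflTransGen_withCage (hC : C.Valid) {cs : CageIdx Sig A n × Fin 3 → Bool}
    (hC' : { C with cage := cs }.Valid) :
    ReflTransGen (TSSlide (tsGraph Sig A n) (tsK Sig A n)) C.toFinset
      { C with cage := cs }.toFinset := by
  have hmix : ∀ x, (∀ cp, x cp = C.cage cp ∨ x cp = cs cp) → { C with cage := x }.Valid := by
    intro x hx cp
    show C.Free (if x cp then _ else _)
    rcases hx cp with h | h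
    · exact h ▸ hC cp
    · exact h ▸ hC' cp
  refine ReflTransGen.lift (fun x : CageIdx Sig A n × Fin 3 → Bool => { C with cage := x }.toFinset)
    (fun _ _ h => h) _ _ (ReflTransGen.of_update_steps fun x hx cp hne => ?_)
  have hflip : cs cp = !x cp := by cases h : x cp <;> simp_all
  rw [hflip]
  refine tsSlide_withCage_flip (C := { C with cage := x }) cp (hmix x hx) (hmix _ fun cp' => ?_)
  by_cases h : cp' = cp
  · subst h; simp [hflip]
  · simpa [update_of_ne h] using hx cp'

end Slides

end TokenConfig

section EvenOddSteps

variable {Sig : Type} {A : Finset (Sig × Sig)} {n : ℕ}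

theorem EOStep.eq_or_eq {w w' : Fin n → Sig} (h : EOStep Sig n w w') {i i' : Fin n}
    (hii' : (i' : ℕ) = i + 1) : w i = w' i ∨ w i' = w' i' := by
  rcases h with h | h <;> rcases Nat.even_or_odd ((i : ℕ) + 1) with hi | hi
  · exact .inr (h i' (hii' ▸ hi.add_one))
  · exact .inl (h i hi)
  · exact .inl (h i hi)
  · exact .inr (h i' (hii' ▸ hi.add_one))

/-- Consecutive positions have different parities, so one of them is left unchanged by an
even/odd step. -/
theorem isWord_of_eoStep {w w' x : Fin n → Sig} (hw : IsWord Sig A n w)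
    (hw' : IsWord Sig A n w') (hstep : EOStep Sig n w w') (hx : ∀ i, x i = w i ∨ x i = w' i) :
    IsWord Sig A n x := by
  intro i i' hii'
  have : (x i, x i') = (w i, w i') ∨ (x i, x i') = (w' i, w' i') := by
    rcases hstep.eq_or_eq hii' with h | h <;> rcases hx i with hi | hi <;>
      rcases hx i' with hi' | hi' <;> simp_all
  rcases this with h | h <;> rw [h]
  exacts [hw i i' hii', hw' i i' hii']

end EvenOddSteps

section Words

variable {Sig : Type} [DecidableEq Sig] {A : Finset (Sig × Sig)} {n : ℕ}

local notation "Reach" => ReflTransGen (TSSlide (tsGraph Sig A n) (tsK Sig A n))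

def wordCage (w : Fin n → Sig) : CageIdx Sig A n × Fin 3 → Bool :=
  fun cp => decide (cageOcc Sig A n w cp.1)

/-- The cage sides of `I_w` with the cage at `o^{j+1}`/`e^{j+1}` turned towards the switch
vertices, which frees `o^{j+1}`/`e^{j+1}` for the token of position `j`. -/
def parkCage (w : Fin n → Sig) (j : Fin n) : CageIdx Sig A n × Fin 3 → Bool :=
  fun cp => decide (cageOcc Sig A n w cp.1 ∨ cp.1 = .inr j)

@[simp] theorem wordCage_inr (w : Fin n → Sig) (i : Fin n) (p : Fin 3) :
    wordCage (A := A) w (.inr i, p) = false :=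
  decide_eq_false id

@[simp] theorem parkCage_inr (w : Fin n → Sig) (j i : Fin n) (p : Fin 3) :
    parkCage (A := A) w j (.inr i, p) = decide (i = j) := by
  simp [parkCage, cageOcc]

def wordConfig (w : Fin n → Sig) (z : Fin 2) : TokenConfig Sig A n :=
  ⟨z, fun i => some (w i), wordCage w⟩

def parkConfig (w : Fin n → Sig) (j : Fin n) (z : Fin 2) : TokenConfig Sig A n :=
  ⟨z, update (fun i => some (w i)) j none, parkCage w j⟩

theorem TokenConfig.free_of_isWord {C : TokenConfig Sig A n} {w : Fin n → Sig}
    (hw : IsWord Sig A n w) (hpos : ∀ i σ, C.pos i = some σ → w i = σ)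
    (q : {q : (Fin n × Fin n) × Sig × Sig // (q.1.2 : ℕ) = q.1.1 + 1 ∧ (q.2.1, q.2.2) ∉ A}) :
    C.Free (if cageOcc Sig A n w (.inl q) then cageH1v Sig A n (.inl q)
      else cageH2v Sig A n (.inl q)) := by
  obtain ⟨⟨⟨i, i'⟩, σ, τ⟩, hii', hA⟩ := q
  split_ifs with hocc <;> refine TokenConfig.free_x.mpr fun hi => ?_
  · exact hA (hpos i σ hi ▸ (hocc : w i' = τ) ▸ hw i i' hii')
  · exact hocc (hpos i' τ hi)

theorem valid_wordConfig {w : Fin n → Sig} (hw : IsWord Sig A n w) (z : Fin 2) :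
    (wordConfig w z : TokenConfig Sig A n).Valid := by
  rintro ⟨q | i, p⟩
  · simpa [wordConfig, wordCage] using
      (wordConfig w z).free_of_isWord hw (fun _ _ => Option.some.inj) q
  · simp [wordConfig, cageH2v]

theorem valid_mk_parkCage {w : Fin n → Sig} (hw : IsWord Sig A n w) {j : Fin n} {z : Fin 2}
    (hz : (.inr (.inr z) : BaseV Sig n) ≠ cageH1v Sig A n (.inr j))
    {sp : Fin n → Option Sig} (hpos : ∀ i σ, sp i = some σ → w i = σ)
    (hnone : ∀ i ≠ j, sp i ≠ none) :
    (⟨z, sp, parkCage w j⟩ : TokenConfig Sig A n).Valid := by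
  rintro ⟨q | i, p⟩
  · simpa [parkCage] using (TokenConfig.mk z sp (parkCage w j)).free_of_isWord hw hpos q
  · by_cases hij : i = j
    · subst hij
      simpa [cageH1v] using hz
    · simpa [hij, cageH2v] using hnone i hij

theorem valid_parkConfig {w : Fin n → Sig} (hw : IsWord Sig A n w) {j : Fin n} {z : Fin 2}
    (hz : (.inr (.inr z) : BaseV Sig n) ≠ cageH1v Sig A n (.inr j)) :
    (parkConfig w j z : TokenConfig Sig A n).Valid :=
  valid_mk_parkCage hw hz (fun i σ h => by by_cases hij : i = j <;> simp_all)
    (fun i hij => by simp [hij])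

theorem iword_eq_wordConfig_toFinset [Fintype Sig] (w : Fin n → Sig) :
    Iword Sig A n w = (wordConfig w 0).toFinset := by
  ext ((⟨i, σ⟩ | i | a) | ⟨c, j⟩)
  · simp [Iword, TokenConfig.mem_toFinset_inl, wordConfig]
  · simp [Iword, TokenConfig.mem_toFinset_inl, wordConfig]
  · simp [Iword, TokenConfig.mem_toFinset_inl, wordConfig, eq_comm]
  · by_cases h : cageOcc Sig A n w c <;>
      simp [Iword, TokenConfig.mem_toFinset_inr, wordConfig, wordCage, h,
        exists_cageSlot_true_eq_iff, exists_cageSlot_false_eq_iff]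

theorem reflTransGen_iword_parkConfig [Fintype Sig] {w : Fin n → Sig} (hw : IsWord Sig A n w)
    {j : Fin n} {z : Fin 2} (hz : (.inr (.inr z) : BaseV Sig n) ≠ cageH1v Sig A n (.inr j)) :
    Reach (Iword Sig A n w) (parkConfig w j z).toFinset := by
  let C : TokenConfig Sig A n := { wordConfig (A := A) w z with cage := parkCage w j }
  have hC : C.Valid := valid_mk_parkCage hw hz (fun _ _ => Option.some.inj)
    fun _ _ => Option.some_ne_none _
  rw [iword_eq_wordConfig_toFinset]
  calc Reach (wordConfig w 0).toFinset (wordConfig w z).toFinset := by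
        by_cases h0 : z = 0
        · rw [h0]
        · exact .single (TokenConfig.tsSlide_withSwitch (Ne.symm h0) (valid_wordConfig hw 0)
            (valid_wordConfig hw z))
    Reach _ C.toFinset := TokenConfig.reflTransGen_withCage (valid_wordConfig hw z) hC
    Reach _ (parkConfig w j z).toFinset :=
        .single (TokenConfig.tsSlide_withPos_update_none rfl hC (valid_parkConfig hw hz))

theorem parkConfig_withCage {w w' : Fin n → Sig} {j : Fin n} (hww' : ∀ i ≠ j, w i = w' i)
    (z : Fin 2) :
    ({ parkConfig (A := A) w j z with cage := parkCage w' j } : TokenConfig Sig A n) =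
      parkConfig w' j z := by
  simp only [parkConfig, TokenConfig.mk.injEq, true_and, and_true]
  funext i
  by_cases hij : i = j <;> simp [hij, hww']

theorem reflTransGen_iword_of_eq_of_ne [Fintype Sig] {w w' : Fin n → Sig}
    (hw : IsWord Sig A n w) (hw' : IsWord Sig A n w') {j : Fin n} (hww' : ∀ i ≠ j, w i = w' i) :
    Reach (Iword Sig A n w) (Iword Sig A n w') := by
  obtain ⟨z, hz⟩ : ∃ z : Fin 2, (.inr (.inr z) : BaseV Sig n) ≠ cageH1v Sig A n (.inr j) :=
    ⟨if Odd ((j : ℕ) + 1) then 1 else 0, by split_ifs <;> simp [cageH1v, *]⟩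
  calc Reach (Iword Sig A n w) (parkConfig w j z).toFinset := reflTransGen_iword_parkConfig hw hz
    Reach _ (parkConfig w' j z).toFinset := by
      rw [← parkConfig_withCage hww']
      exact TokenConfig.reflTransGen_withCage (valid_parkConfig hw hz)
        (parkConfig_withCage hww' z ▸ valid_parkConfig hw' hz)
    Reach _ (Iword Sig A n w') := symm (reflTransGen_iword_parkConfig hw' hz)

theorem reflTransGen_iword_of_eoStep [Fintype Sig] {w w' : Fin n → Sig}
    (hw : IsWord Sig A n w) (hw' : IsWord Sig A n w') (hstep : EOStep Sig n w w') :
    Reach (Iword Sig A n w) (Iword Sig A n w') := by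
  refine ReflTransGen.lift' (Iword Sig A n) (fun _ _ h => h) _ _
    (ReflTransGen.of_update_steps fun x hx j _ => ?_)
  have hx' : ∀ i, update x j (w' j) i = w i ∨ update x j (w' j) i = w' i := fun i => by
    by_cases hij : i = j
    · subst hij; simp
    · simpa [hij] using hx i
  exact reflTransGen_iword_of_eq_of_ne (isWord_of_eoStep hw hw' hstep hx)
    (isWord_of_eoStep hw hw' hstep hx') fun i hij => (update_of_ne hij _ _).symm

theorem reflTransGen_iword_of_eoReach [Fintype Sig] {ws wt : Fin n → Sig}
    (h : EOReach Sig A n ws wt) : Reach (Iword Sig A n ws) (Iword Sig A n wt) := by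
  obtain ⟨ℓ, w, rfl, rfl, hword, hstep⟩ := h
  suffices ∀ i ≤ ℓ, Reach (Iword Sig A n (w 0)) (Iword Sig A n (w i)) from this ℓ le_rfl
  intro i hi
  induction i with
  | zero => rfl
  | succ i ih =>
    exact (ih (by omega)).trans (reflTransGen_iword_of_eoStep (hword i (by omega)) (hword _ hi)
      (hstep i hi))

end Words

theorem stmt18_general (Sig : Type) [Fintype Sig] [DecidableEq Sig] (A : Finset (Sig × Sig))
    (n : ℕ) (ws wt : Fin n → Sig) (hws : IsWord Sig A n ws)
    (hreach : EOReach Sig A n ws wt) :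
    TSReach (tsGraph Sig A n) (tsK Sig A n) (Iword Sig A n ws) (Iword Sig A n wt) := by
  refine TSReach.of_reflTransGen ?_ ?_ (reflTransGen_iword_of_eoReach hreach) <;>
    rw [iword_eq_wordConfig_toFinset]
  exacts [TokenConfig.isIndep (valid_wordConfig hws 0), TokenConfig.card_toFinset]

/-- If `(W = (Σ, A), ws, wt)` is a yes-instance of Even/Odd
Word Reconfiguration, then `I_{ws}` and `I_{wt}` lie in the same connected
component of the token-sliding reconfiguration graph `S_k(G(Σ, A, n))`. -/
theorem stmt18 (Sig : Type) [Fintype Sig] [DecidableEq Sig] (A : Finset (Sig × Sig))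
    (n : ℕ) (hn : Even n) (hn0 : 0 < n)
    (ws wt : Fin n → Sig) (hws : IsWord Sig A n ws) (hwt : IsWord Sig A n wt)
    (hreach : EOReach Sig A n ws wt) :
    TSReach (tsGraph Sig A n) (tsK Sig A n) (Iword Sig A n ws) (Iword Sig A n wt) :=
  stmt18_general Sig A n ws wt hws hreach
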